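/- Let u₀(x) = log ∑_{λ ∈ S} e^{⟨x, λ⟩} for a finite set S ⊂ ℝᵐ, and let l be an affine function on ℝᵐ with l ≥ 0 on the convex hull of S. Then there exists a constant C > 0 depending only on S and l such that for all x, y ∈ ℝᵐ with |x - y| ≤ R, one has l(∇u₀(x)) ≤ e^{C·R} · l(∇u₀(y)). -/

import Mathlib

/-!
The gradient of `u₀(x) = log ∑_{λ ∈ S} e^{⟨x, λ⟩}` is the center of mass of `S` with weights
`e^{⟨x, λ⟩}`, so `l(∇u₀(x))` is the same weighted average of the values `l(λ) ≥ 0`. Moving from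
`y` to `x` changes every weight by a factor between `e^{-MR}` and `e^{MR}`, where `M` bounds the
norms of the points of `S`; hence the average of nonnegative values changes by at most `e^{2MR}`.
-/

open scoped RealInnerProductSpace
open Real Finset

theorem AffineMap.map_centerMass {R E F ι : Type*} [Field R] [AddCommGroup E] [Module R E]
    [AddCommGroup F] [Module R F] (f : E →ᵃ[R] F) {t : Finset ι} {w : ι → R} (z : ι → E)
    (hw : ∑ i ∈ t, w i ≠ 0) : f (t.centerMass w z) = t.centerMass w (f ∘ z) := by
  have hw₁ : ∑ i ∈ t, ((∑ j ∈ t, w j)⁻¹ • w) i = 1 := by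
    simp [← Finset.mul_sum, inv_mul_cancel₀ hw]
  rw [← t.centerMass_smul_left (R' := R) z (inv_ne_zero hw),
    ← t.centerMass_smul_left (R' := R) (f ∘ z) (inv_ne_zero hw),
    ← affineCombination_eq_centerMass hw₁, ← affineCombination_eq_centerMass hw₁,
    t.map_affineCombination _ _ hw₁]

theorem Finset.centerMass_le_sq_mul_centerMass {ι : Type*} {s : Finset ι} {w w' f : ι → ℝ}
    {c : ℝ} (hw : ∀ i ∈ s, 0 < w i) (hw' : ∀ i ∈ s, 0 < w' i) (hf : ∀ i ∈ s, 0 ≤ f i)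
    (hww' : ∀ i ∈ s, w i ≤ c * w' i) (hw'w : ∀ i ∈ s, w' i ≤ c * w i) :
    s.centerMass w f ≤ c ^ 2 * s.centerMass w' f := by
  rcases s.eq_empty_or_nonempty with rfl | hs
  · simp [centerMass_empty]
  obtain ⟨i, hi⟩ := hs
  have hc : 0 ≤ c := nonneg_of_mul_nonneg_left ((hw' i hi).le.trans (hw'w i hi)) (hw i hi)
  have hW : 0 < ∑ i ∈ s, w i := sum_pos hw ⟨i, hi⟩
  have hW' : 0 < ∑ i ∈ s, w' i := sum_pos hw' ⟨i, hi⟩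
  have hden : ∑ i ∈ s, w' i ≤ c * ∑ i ∈ s, w i := by
    rw [mul_sum]; exact sum_le_sum hw'w
  have hnum : ∑ i ∈ s, w i * f i ≤ c * ∑ i ∈ s, w' i * f i := by
    rw [mul_sum]
    refine sum_le_sum fun i hi => ?_
    rw [← mul_assoc]
    exact mul_le_mul_of_nonneg_right (hww' i hi) (hf i hi)
  simp only [centerMass, smul_eq_mul]
  rw [inv_mul_le_iff₀ hW]
  calc ∑ i ∈ s, w i * f i ≤ c * ∑ i ∈ s, w' i * f i := hnum
    _ = c * ((∑ i ∈ s, w' i) * ((∑ i ∈ s, w' i)⁻¹ * ∑ i ∈ s, w' i * f i)) := by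
        field_simp
    _ ≤ c * ((c * ∑ i ∈ s, w i) * ((∑ i ∈ s, w' i)⁻¹ * ∑ i ∈ s, w' i * f i)) := by
        gcongr
        exact mul_nonneg (inv_nonneg.2 hW'.le)
          (sum_nonneg fun i hi => mul_nonneg (hw' i hi).le (hf i hi))
    _ = (∑ i ∈ s, w i) * (c ^ 2 * ((∑ i ∈ s, w' i)⁻¹ * ∑ i ∈ s, w' i * f i)) := by ring

variable {E : Type*} [NormedAddCommGroup E] [InnerProductSpace ℝ E]

theorem hasGradientAt_log_sum_exp_inner [CompleteSpace E] {S : Finset E} (hS : S.Nonempty)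
    (x : E) :
    HasGradientAt (fun z => log (∑ p ∈ S, exp ⟪z, p⟫))
      (S.centerMass (fun p => exp ⟪x, p⟫) id) x := by
  have hsum : HasFDerivAt (fun z => ∑ p ∈ S, exp ⟪z, p⟫)
      (∑ p ∈ S, exp ⟪x, p⟫ • innerSL ℝ p) x := by
    refine HasFDerivAt.fun_sum fun p _ => ?_
    simpa [real_inner_comm p] using (innerSL ℝ p).hasFDerivAt.exp (x := x)
  rw [hasGradientAt_iff_hasFDerivAt]
  refine (hsum.log (sum_pos (fun p _ => exp_pos _) hS).ne').congr_fderiv ?_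
  ext y
  simp [centerMass, mul_sum]

theorem exp_inner_le_exp_dist_mul (x y p : E) :
    exp ⟪x, p⟫ ≤ exp (dist x y * ‖p‖) * exp ⟪y, p⟫ := by
  rw [← exp_add, dist_eq_norm]
  gcongr
  calc ⟪x, p⟫ = ⟪x - y, p⟫ + ⟪y, p⟫ := by rw [inner_sub_left]; ring
    _ ≤ ‖x - y‖ * ‖p‖ + ⟪y, p⟫ := by gcongr; exact real_inner_le_norm _ _

theorem centerMass_exp_inner_le_exp_mul {S : Finset E} {f : E → ℝ} {M R : ℝ} {x y : E}
    (hM : ∀ p ∈ S, ‖p‖ ≤ M) (hf : ∀ p ∈ S, 0 ≤ f p) (hR : dist x y ≤ R) :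
    S.centerMass (fun p => exp ⟪x, p⟫) f ≤
      exp (2 * M * R) * S.centerMass (fun p => exp ⟪y, p⟫) f := by
  have hexp : ∀ a b : E, dist a b ≤ R → ∀ p ∈ S, exp ⟪a, p⟫ ≤ exp (M * R) * exp ⟪b, p⟫ :=
    fun a b hab p hp => (exp_inner_le_exp_dist_mul a b p).trans <|
      mul_le_mul_of_nonneg_right (exp_le_exp.2 <| by
        rw [mul_comm M]
        exact mul_le_mul hab (hM p hp) (norm_nonneg p) (dist_nonneg.trans hab)) (exp_pos _).le
  calc S.centerMass (fun p => exp ⟪x, p⟫) f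
      ≤ exp (M * R) ^ 2 * S.centerMass (fun p => exp ⟪y, p⟫) f :=
        centerMass_le_sq_mul_centerMass (fun _ _ => exp_pos _) (fun _ _ => exp_pos _) hf
          (hexp x y hR) (hexp y x (dist_comm x y ▸ hR))
    _ = exp (2 * M * R) * S.centerMass (fun p => exp ⟪y, p⟫) f := by
        rw [← exp_nat_mul]; push_cast; ring_nf

/-- Harnack-type estimate: for `u₀(x) = log ∑_{λ∈S} e^{⟨x,λ⟩}` and an affine
function `l ≥ 0` on the convex hull of `S`, there is `C > 0` with
`l(∇u₀(x)) ≤ e^{C·R} · l(∇u₀(y))` whenever `|x - y| ≤ R`. -/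
theorem stmt_9 {m : ℕ} (S : Finset (EuclideanSpace ℝ (Fin m))) (hS : S.Nonempty)
    (l : EuclideanSpace ℝ (Fin m) →ᵃ[ℝ] ℝ)
    (hl : ∀ p ∈ convexHull ℝ (S : Set (EuclideanSpace ℝ (Fin m))), 0 ≤ l p) :
    ∃ C > 0, ∀ x y : EuclideanSpace ℝ (Fin m), ∀ R : ℝ, dist x y ≤ R →
      l (gradient (fun z => Real.log (∑ lam ∈ S, Real.exp ⟪z, lam⟫)) x) ≤
        Real.exp (C * R) *
          l (gradient (fun z => Real.log (∑ lam ∈ S, Real.exp ⟪z, lam⟫)) y) := by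
  set M := ∑ p ∈ S, ‖p‖ + 1
  have hM : ∀ p ∈ S, ‖p‖ ≤ M := fun p hp =>
    (single_le_sum (fun q _ => norm_nonneg q) hp).trans (le_add_of_nonneg_right zero_le_one)
  have hW : ∀ x : EuclideanSpace ℝ (Fin m), ∑ p ∈ S, exp ⟪x, p⟫ ≠ 0 := fun x =>
    (sum_pos (fun p _ => exp_pos _) hS).ne'
  refine ⟨2 * M, by positivity, fun x y R hR => ?_⟩
  rw [(hasGradientAt_log_sum_exp_inner hS x).gradient,
    (hasGradientAt_log_sum_exp_inner hS y).gradient, l.map_centerMass _ (hW x),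
    l.map_centerMass _ (hW y)]
  exact centerMass_exp_inner_le_exp_mul hM (fun p hp => hl p (subset_convexHull ℝ _ hp)) hR
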